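/- Every 8-regular K3-irregular simple graph has at most 22 vertices. -/

import Mathlib

/-- The `K₃`-degree (triangle-degree) of a vertex `v` in a finite simple graph `G`:
the number of triangles (3-cliques) of `G` containing `v`. -/
def K3deg {V : Type*} (G : SimpleGraph V) [Fintype V] [DecidableEq V] [DecidableRel G.Adj]
    (v : V) : ℕ :=
  ((G.cliqueFinset 3).filter (fun t => v ∈ t)).card

/-!
Let `v` have the largest triangle-degree `t v`. Twice `t v` is the sum of the codegrees
`|N(v) ∩ N(u)|` over the neighbours `u` of `v`. A codegree of 7 would give
`N(u) - v = N(v) - u` and hence `t u = t v`, so every codegree is at most 6. For a neighbour `u`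
of codegree 6, `N(v)` and `N(u)` differ from their common part by single vertices `p` and `x`,
and comparing the two triangle counts gives `t v - 6 ≤ t u < t v`; so at most six neighbours
have codegree 6 and `t v ≤ 23`. If `t v = 23`, the codegree-6 neighbours take exactly the values
`17, …, 22`; for the one with value 22, its outside neighbour `x` is adjacent to at least five
neighbours of `v`, and this leaves too few free values for the codegree-6 ones among them.
Thus all triangle-degrees lie in `0, …, 22`, and 23 vertices would make them sum to 253,
which is not a multiple of 3.
-/

open Finset

theorem Finset.sum_eq_sum_range_of_injective {α : Type*} [Fintype α] {f : α → ℕ}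
    (hf : Function.Injective f) (hlt : ∀ a, f a < Fintype.card α) :
    ∑ a, f a = ∑ i ∈ range (Fintype.card α), i := by
  have himg : univ.image f = range (Fintype.card α) :=
    eq_of_subset_of_card_le
      (fun _ hi => by obtain ⟨a, -, rfl⟩ := mem_image.1 hi; exact mem_range.2 (hlt a))
      (by rw [card_image_of_injective _ hf, card_range, card_univ])
  rw [← himg, sum_image fun a _ b _ h => hf h]

namespace SimpleGraph

variable {V : Type*} [Fintype V] [DecidableEq V] (G : SimpleGraph V) [DecidableRel G.Adj]

def codegree (u v : V) : ℕ := #(G.neighborFinset u ∩ G.neighborFinset v)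

def inducedDegreeSum (s : Finset V) : ℕ := ∑ a ∈ s, #(s ∩ G.neighborFinset a)

theorem codegree_comm (u v : V) : G.codegree u v = G.codegree v u := by
  rw [codegree, codegree, inter_comm]

theorem codegree_eq_card_filter_cliqueFinset {v a : V} (h : G.Adj v a) :
    G.codegree v a = #{T ∈ G.cliqueFinset 3 | v ∈ T ∧ a ∈ T} := by
  have hT : {T ∈ G.cliqueFinset 3 | v ∈ T ∧ a ∈ T} =
      (G.neighborFinset v ∩ G.neighborFinset a).image fun b => {v, a, b} := by
    ext T
    simp only [mem_filter, mem_cliqueFinset_iff, mem_image, mem_inter, mem_neighborFinset]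
    constructor
    · rintro ⟨hT, hvT, haT⟩
      have haT' : a ∈ T.erase v := mem_erase.2 ⟨h.ne', haT⟩
      obtain ⟨b, hb⟩ := card_eq_one.1 (by
        rw [card_erase_of_mem haT', card_erase_of_mem hvT, hT.2] : #((T.erase v).erase a) = 1)
      obtain rfl : T = {v, a, b} := by rw [← hb, insert_erase haT', insert_erase hvT]
      obtain ⟨-, hvb, hab⟩ := is3Clique_triple_iff.1 hT
      exact ⟨b, ⟨hvb, hab⟩, rfl⟩
    · rintro ⟨b, ⟨hvb, hab⟩, rfl⟩
      exact ⟨is3Clique_triple_iff.2 ⟨h, hvb, hab⟩, by simp, by simp⟩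
  rw [hT, card_image_of_injOn]
  · rfl
  intro b hb c _ hbc
  simp only [coe_inter, Set.mem_inter_iff, mem_coe, mem_neighborFinset] at hb
  have : b ∈ ({v, a, c} : Finset V) := by simp only at hbc; rw [← hbc]; simp
  simp only [mem_insert, mem_singleton] at this
  rcases this with rfl | rfl | rfl
  · exact absurd hb.1 G.irrefl
  · exact absurd hb.2 G.irrefl
  · rfl

theorem two_mul_K3deg (v : V) : 2 * K3deg G v = ∑ a ∈ G.neighborFinset v, G.codegree v a := by
  have key := sum_card_bipartiteAbove_eq_sum_card_bipartiteBelow (fun T a => a ∈ T)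
    (s := {T ∈ G.cliqueFinset 3 | v ∈ T}) (t := G.neighborFinset v)
  have h2 : ∀ T ∈ {T ∈ G.cliqueFinset 3 | v ∈ T},
      #((G.neighborFinset v).bipartiteAbove (fun T a => a ∈ T) T) = 2 := by
    intro T hT
    obtain ⟨hT, hvT⟩ := mem_filter.1 hT
    have hT := mem_cliqueFinset_iff.1 hT
    have : (G.neighborFinset v).bipartiteAbove (fun T a => a ∈ T) T = T.erase v := by
      ext a
      simp only [mem_bipartiteAbove, mem_neighborFinset, mem_erase]
      exact ⟨fun ⟨h, haT⟩ => ⟨h.ne', haT⟩,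
        fun ⟨hav, haT⟩ => ⟨hT.1 hvT haT hav.symm, haT⟩⟩
    rw [this, card_erase_of_mem hvT, hT.2]
  rw [sum_congr rfl h2, sum_const, smul_eq_mul] at key
  rw [K3deg, mul_comm, key]
  refine sum_congr rfl fun a ha => ?_
  rw [codegree_eq_card_filter_cliqueFinset G ((G.mem_neighborFinset v a).1 ha), bipartiteBelow,
    filter_filter]

theorem sum_K3deg : ∑ v, K3deg G v = 3 * #(G.cliqueFinset 3) := by
  calc ∑ v, K3deg G v = ∑ T ∈ G.cliqueFinset 3, #(univ.bipartiteBelow (· ∈ ·) T) :=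
        sum_card_bipartiteAbove_eq_sum_card_bipartiteBelow _
    _ = ∑ T ∈ G.cliqueFinset 3, 3 := sum_congr rfl fun T hT => by
        rw [bipartiteBelow, filter_mem_eq_inter, univ_inter, (mem_cliqueFinset_iff.1 hT).2]
    _ = 3 * #(G.cliqueFinset 3) := by rw [sum_const, smul_eq_mul, mul_comm]

theorem inducedDegreeSum_insert {x : V} {s : Finset V} (hx : x ∉ s) :
    G.inducedDegreeSum (insert x s) = G.inducedDegreeSum s + 2 * #(s ∩ G.neighborFinset x) := by
  have hterm : ∀ a ∈ s, #(insert x s ∩ G.neighborFinset a) =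
      #(s ∩ G.neighborFinset a) + if G.Adj a x then 1 else 0 := by
    intro a _
    split_ifs with hax
    · rw [insert_inter_of_mem ((G.mem_neighborFinset a x).2 hax),
        card_insert_of_notMem fun h => hx (mem_inter.1 h).1]
    · rw [insert_inter_of_notMem fun h => hax ((G.mem_neighborFinset a x).1 h), add_zero]
  have hcount : ∑ a ∈ s, (if G.Adj a x then 1 else 0) = #(s ∩ G.neighborFinset x) := by
    rw [← card_filter, ← filter_mem_eq_inter]
    simp only [mem_neighborFinset, G.adj_comm]
  rw [inducedDegreeSum, sum_insert hx, insert_inter_of_notMem (G.notMem_neighborFinset_self x),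
    sum_congr rfl hterm, sum_add_distrib, hcount, inducedDegreeSum]
  ring

variable {G}

theorem two_mul_K3deg_of_neighborFinset_eq_insert {u v : V} {s : Finset V} (hu : u ∉ s)
    (hv : G.neighborFinset v = insert u s) :
    2 * K3deg G v = G.inducedDegreeSum s + 2 * #(s ∩ G.neighborFinset u) := by
  rw [two_mul_K3deg, ← G.inducedDegreeSum_insert hu, ← hv]
  rfl

theorem two_mul_K3deg_of_neighborFinset_eq_insert_insert {u v p : V} {s : Finset V}
    (hv : G.neighborFinset v = insert u (insert p s)) (hp : p ∉ insert u (G.neighborFinset u))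
    (hs : s ⊆ G.neighborFinset u) :
    2 * K3deg G v = G.inducedDegreeSum s + 2 * #(s ∩ G.neighborFinset p) + 2 * #s := by
  rw [mem_insert, not_or] at hp
  have hus : u ∉ insert p s := by
    rw [mem_insert, not_or]
    exact ⟨Ne.symm hp.1, fun h => G.notMem_neighborFinset_self u (hs h)⟩
  rw [two_mul_K3deg_of_neighborFinset_eq_insert hus hv,
    G.inducedDegreeSum_insert fun h => hp.2 (hs h), insert_inter_of_notMem hp.2,
    inter_eq_left.2 hs]

theorem K3deg_eq_of_neighborFinset_eq_insert {u v : V} {s : Finset V}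
    (hv : G.neighborFinset v = insert u s) (hu : G.neighborFinset u = insert v s) :
    K3deg G u = K3deg G v := by
  have hsu : s ⊆ G.neighborFinset u := hu ▸ subset_insert v s
  have hsv : s ⊆ G.neighborFinset v := hv ▸ subset_insert u s
  have h2v := two_mul_K3deg_of_neighborFinset_eq_insert
    (fun h => G.notMem_neighborFinset_self u (hsu h)) hv
  have h2u := two_mul_K3deg_of_neighborFinset_eq_insert
    (fun h => G.notMem_neighborFinset_self v (hsv h)) hu
  rw [inter_eq_left.2 hsu] at h2v
  rw [inter_eq_left.2 hsv] at h2u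
  omega

theorem K3deg_add_card_inter_eq {u v p x : V} {s : Finset V}
    (hv : G.neighborFinset v = insert u (insert p s))
    (hu : G.neighborFinset u = insert v (insert x s))
    (hp : p ∉ insert u (G.neighborFinset u)) (hx : x ∉ insert v (G.neighborFinset v)) :
    K3deg G u + #(s ∩ G.neighborFinset p) = K3deg G v + #(s ∩ G.neighborFinset x) := by
  have hsu : s ⊆ G.neighborFinset u := hu ▸ (subset_insert x s).trans (subset_insert v _)
  have hsv : s ⊆ G.neighborFinset v := hv ▸ (subset_insert p s).trans (subset_insert u _)
  have h2v := two_mul_K3deg_of_neighborFinset_eq_insert_insert hv hp hsu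
  have h2u := two_mul_K3deg_of_neighborFinset_eq_insert_insert hu hx hsv
  omega

theorem codegree_lt_degree {u v : V} (h : G.Adj v u) : G.codegree v u < G.degree u := by
  rw [← card_neighborFinset_eq_degree,
    ← card_erase_add_one ((G.mem_neighborFinset u v).2 h.symm)]
  refine Nat.lt_succ_of_le (card_le_card fun a ha => mem_erase.2 ⟨?_, (mem_inter.1 ha).2⟩)
  rintro rfl
  exact G.notMem_neighborFinset_self a (mem_inter.1 ha).1

theorem neighborFinset_eq_insert_inter {u v : V} (h : G.Adj v u)
    (hc : G.codegree v u + 1 = G.degree v) :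
    G.neighborFinset v = insert u (G.neighborFinset v ∩ G.neighborFinset u) := by
  refine (eq_of_subset_of_card_le (insert_subset ((G.mem_neighborFinset v u).2 h)
    inter_subset_left) ?_).symm
  rw [card_neighborFinset_eq_degree, ← hc,
    card_insert_of_notMem fun hu => G.notMem_neighborFinset_self u (mem_inter.1 hu).2]
  rfl

theorem neighborFinset_eq_insert_insert_inter {u v p : V} (h : G.Adj v u)
    (hc : G.codegree v u + 2 = G.degree v) (hp : p ∈ G.neighborFinset v)
    (hpu : p ∉ insert u (G.neighborFinset u)) :
    G.neighborFinset v = insert u (insert p (G.neighborFinset v ∩ G.neighborFinset u)) := by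
  refine (eq_of_subset_of_card_le (insert_subset ((G.mem_neighborFinset v u).2 h)
    (insert_subset hp inter_subset_left)) ?_).symm
  rw [mem_insert, not_or] at hpu
  have hpS : p ∉ G.neighborFinset v ∩ G.neighborFinset u := fun hp => hpu.2 (mem_inter.1 hp).2
  have huS : u ∉ insert p (G.neighborFinset v ∩ G.neighborFinset u) := by
    rw [mem_insert, not_or]
    exact ⟨Ne.symm hpu.1, fun hu => G.notMem_neighborFinset_self u (mem_inter.1 hu).2⟩
  rw [card_neighborFinset_eq_degree, ← hc, card_insert_of_notMem huS, card_insert_of_notMem hpS]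
  rfl

theorem exists_mem_neighborFinset_notMem_insert {u v : V} (h : G.Adj v u)
    (hc : G.codegree v u + 1 < G.degree v) :
    ∃ p ∈ G.neighborFinset v, p ∉ insert u (G.neighborFinset u) := by
  by_contra! hsub
  refine hc.not_ge ((card_neighborFinset_eq_degree G v).symm.trans_le
    ((card_le_card fun a ha => ?_).trans (card_insert_le u _)))
  rcases mem_insert.1 (hsub a ha) with rfl | hau
  · exact mem_insert_self _ _
  · exact mem_insert_of_mem (mem_inter.2 ⟨ha, hau⟩)

theorem K3deg_eq_of_codegree_add_one_eq {u v : V} (h : G.Adj v u)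
    (hcv : G.codegree v u + 1 = G.degree v) (hcu : G.codegree v u + 1 = G.degree u) :
    K3deg G u = K3deg G v := by
  refine K3deg_eq_of_neighborFinset_eq_insert (neighborFinset_eq_insert_inter h hcv) ?_
  rw [inter_comm]
  exact neighborFinset_eq_insert_inter h.symm (G.codegree_comm u v ▸ hcu)

/-- Here `N v = {u, p} ∪ S` and `N u = {v, x} ∪ S` with `S = N v ∩ N u`, so the two triangle
counts differ only by the edges from `p`, resp. `x`, into `S`. -/
theorem K3deg_add_codegree_eq {u v p x : V} (h : G.Adj v u)
    (hcv : G.codegree v u + 2 = G.degree v) (hcu : G.codegree v u + 2 = G.degree u)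
    (hp : p ∈ G.neighborFinset v) (hpu : p ∉ insert u (G.neighborFinset u))
    (hx : x ∈ G.neighborFinset u) (hxv : x ∉ insert v (G.neighborFinset v)) :
    K3deg G u + G.codegree v p =
      K3deg G v + #(G.neighborFinset v ∩ G.neighborFinset u ∩ G.neighborFinset x) := by
  have hv := neighborFinset_eq_insert_insert_inter h hcv hp hpu
  have hu := neighborFinset_eq_insert_insert_inter h.symm (G.codegree_comm u v ▸ hcu) hx hxv
  rw [inter_comm (G.neighborFinset u)] at hu
  have hup : u ∉ G.neighborFinset p := fun hup =>
    hpu (mem_insert_of_mem ((G.mem_neighborFinset u p).2 ((G.mem_neighborFinset p u).1 hup).symm))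
  have hcp : G.codegree v p =
      #(G.neighborFinset v ∩ G.neighborFinset u ∩ G.neighborFinset p) := by
    conv_lhs => rw [codegree, hv, insert_inter_of_notMem hup,
      insert_inter_of_notMem (G.notMem_neighborFinset_self p)]
  rw [hcp]
  exact K3deg_add_card_inter_eq hv hu hpu hxv

section Regular

variable {d : ℕ}

theorem codegree_add_two_le (hreg : G.IsRegularOfDegree d) (hinj : Function.Injective (K3deg G))
    {u v : V} (h : G.Adj v u) : G.codegree v u + 2 ≤ d := by
  have hlt := codegree_lt_degree h
  rw [hreg u] at hlt
  by_contra! hc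
  have hc : G.codegree v u + 1 = d := by omega
  exact h.ne (hinj (K3deg_eq_of_codegree_add_one_eq h ((hreg v).symm ▸ hc)
    ((hreg u).symm ▸ hc))).symm

theorem K3deg_add_two_le (hreg : G.IsRegularOfDegree d) (hinj : Function.Injective (K3deg G))
    {u v : V} (h : G.Adj v u) (hc : G.codegree v u + 2 = d) :
    K3deg G v + 2 ≤ K3deg G u + d := by
  obtain ⟨p, hp, hpu⟩ := exists_mem_neighborFinset_notMem_insert h (by rw [hreg v]; omega)
  obtain ⟨x, hx, hxv⟩ := exists_mem_neighborFinset_notMem_insert h.symm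
    (by rw [codegree_comm, hreg u]; omega)
  have hformula :=
    K3deg_add_codegree_eq h ((hreg v).symm ▸ hc) ((hreg u).symm ▸ hc) hp hpu hx hxv
  have hcp := codegree_add_two_le hreg hinj ((G.mem_neighborFinset v p).1 hp)
  omega

theorem K3deg_add_card_inter_le (hreg : G.IsRegularOfDegree d)
    (hinj : Function.Injective (K3deg G)) {v w x : V} (h : G.Adj v w)
    (hc : G.codegree v w + 2 = d) (hx : G.Adj w x) (hxv : x ∉ insert v (G.neighborFinset v)) :
    K3deg G v + #(G.neighborFinset v ∩ G.neighborFinset x) ≤ K3deg G w + d := by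
  obtain ⟨q, hq, hqw⟩ := exists_mem_neighborFinset_notMem_insert h (by rw [hreg v]; omega)
  have hformula := K3deg_add_codegree_eq h ((hreg v).symm ▸ hc) ((hreg w).symm ▸ hc) hq hqw
    ((G.mem_neighborFinset w x).2 hx) hxv
  have hcq := codegree_add_two_le hreg hinj ((G.mem_neighborFinset v q).1 hq)
  have hsplit := card_inter_add_card_sdiff (G.neighborFinset v ∩ G.neighborFinset x)
    (G.neighborFinset w)
  rw [inter_right_comm] at hsplit
  have hsdiff : G.codegree v w + #(G.neighborFinset v \ G.neighborFinset w) = d := by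
    rw [codegree, card_inter_add_card_sdiff, card_neighborFinset_eq_degree, hreg v]
  have hsub : #((G.neighborFinset v ∩ G.neighborFinset x) \ G.neighborFinset w) ≤
      #(G.neighborFinset v \ G.neighborFinset w) :=
    card_le_card (sdiff_subset_sdiff inter_subset_left subset_rfl)
  omega

section Maximal

variable {v : V}

theorem K3deg_mem_Ico_of_codegree_add_two_eq (hreg : G.IsRegularOfDegree d)
    (hinj : Function.Injective (K3deg G)) (hmax : ∀ u, K3deg G u ≤ K3deg G v)
    {u : V} (h : G.Adj v u) (hc : G.codegree v u + 2 = d) :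
    K3deg G u ∈ Ico (K3deg G v + 2 - d) (K3deg G v) := by
  have hle := K3deg_add_two_le hreg hinj h hc
  have hne : K3deg G u ≠ K3deg G v := fun e => h.ne (hinj e).symm
  have := hmax u
  rw [mem_Ico]
  omega

theorem card_filter_codegree_add_two_eq_le (hreg : G.IsRegularOfDegree d)
    (hinj : Function.Injective (K3deg G)) (hmax : ∀ u, K3deg G u ≤ K3deg G v) :
    #{u ∈ G.neighborFinset v | G.codegree v u + 2 = d} ≤ d - 2 := by
  refine (card_le_card_of_injOn (K3deg G) (t := Ico (K3deg G v + 2 - d) (K3deg G v))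
    (fun u hu => ?_) hinj.injOn).trans (by rw [Nat.card_Ico]; omega)
  obtain ⟨hu, hc⟩ := mem_filter.1 hu
  exact K3deg_mem_Ico_of_codegree_add_two_eq hreg hinj hmax ((G.mem_neighborFinset v u).1 hu) hc

theorem exists_codegree_add_two_eq_K3deg_add_one_eq (hreg : G.IsRegularOfDegree d)
    (hinj : Function.Injective (K3deg G)) (hmax : ∀ u, K3deg G u ≤ K3deg G v) (hd : 2 < d)
    (hU : #{u ∈ G.neighborFinset v | G.codegree v u + 2 = d} = d - 2) :
    ∃ z, G.Adj v z ∧ G.codegree v z + 2 = d ∧ K3deg G z + 1 = K3deg G v := by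
  have hmaps : ∀ u ∈ {u ∈ G.neighborFinset v | G.codegree v u + 2 = d},
      K3deg G u ∈ Ico (K3deg G v + 2 - d) (K3deg G v) := fun u hu =>
    K3deg_mem_Ico_of_codegree_add_two_eq hreg hinj hmax
      ((G.mem_neighborFinset v u).1 (mem_filter.1 hu).1) (mem_filter.1 hu).2
  obtain ⟨u, hu⟩ : {u ∈ G.neighborFinset v | G.codegree v u + 2 = d}.Nonempty := by
    rw [← card_pos, hU]
    omega
  have hpos := (mem_Ico.1 (hmaps u hu)).2
  obtain ⟨z, hz, hzv⟩ := surj_on_of_inj_on_of_card_le (fun u _ => K3deg G u) hmaps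
    (fun _ _ _ _ e => hinj e) (by rw [Nat.card_Ico, hU]; omega) (K3deg G v - 1)
    (by rw [mem_Ico]; omega)
  obtain ⟨hz, hzc⟩ := mem_filter.1 hz
  exact ⟨z, (G.mem_neighborFinset v z).1 hz, hzc, by omega⟩

theorem card_filter_codegree_add_two_eq_add_card_le (hreg : G.IsRegularOfDegree d)
    (hinj : Function.Injective (K3deg G)) (hmax : ∀ u, K3deg G u ≤ K3deg G v) {x : V}
    (hxv : x ∉ insert v (G.neighborFinset v)) :
    #{w ∈ G.neighborFinset v ∩ G.neighborFinset x | G.codegree v w + 2 = d} +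
      #(G.neighborFinset v ∩ G.neighborFinset x) ≤ d := by
  set A := G.neighborFinset v ∩ G.neighborFinset x with hA_def
  have hA : #A ≤ d :=
    (card_le_card inter_subset_left).trans (card_neighborFinset_eq_degree G v ▸ (hreg v).le)
  have hcard := card_le_card_of_injOn (K3deg G) (t := Ico (K3deg G v + #A - d) (K3deg G v))
    (s := {w ∈ A | G.codegree v w + 2 = d}) (fun w hw => ?_) hinj.injOn
  · rw [Nat.card_Ico] at hcard
    omega
  obtain ⟨hwA, hc⟩ := mem_filter.1 hw
  obtain ⟨hw, hwx⟩ := mem_inter.1 hwA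
  have h := (G.mem_neighborFinset v w).1 hw
  have hle :=
    K3deg_add_card_inter_le hreg hinj h hc ((G.mem_neighborFinset x w).1 hwx).symm hxv
  rw [← hA_def] at hle
  have hne : K3deg G w ≠ K3deg G v := fun e => h.ne (hinj e).symm
  have := hmax w
  rw [coe_Ico, Set.mem_Ico]
  omega

end Maximal

end Regular

section Octic

variable {v : V}

theorem K3deg_add_one_ne_of_forall_le (hreg : G.IsRegularOfDegree 8)
    (hinj : Function.Injective (K3deg G)) (hmax : ∀ u, K3deg G u ≤ K3deg G v)
    (hfive : ∀ a ∈ G.neighborFinset v, 5 ≤ G.codegree v a)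
    (hU' : #{u ∈ G.neighborFinset v | ¬G.codegree v u + 2 = 8} ≤ 2)
    {z : V} (hz : G.Adj v z) (hzc : G.codegree v z + 2 = 8) :
    K3deg G z + 1 ≠ K3deg G v := by
  intro hz1
  obtain ⟨p, hp, hpz⟩ := exists_mem_neighborFinset_notMem_insert hz (by rw [hreg v]; omega)
  obtain ⟨x, hx, hxv⟩ := exists_mem_neighborFinset_notMem_insert hz.symm
    (by rw [codegree_comm, hreg z]; omega)
  have hformula :=
    K3deg_add_codegree_eq hz ((hreg v).symm ▸ hzc) ((hreg z).symm ▸ hzc) hp hpz hx hxv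
  have hcp := codegree_add_two_le hreg hinj ((G.mem_neighborFinset v p).1 hp)
  have hcp5 := hfive p hp
  have hAU := card_filter_codegree_add_two_eq_add_card_le hreg hinj hmax hxv
  set A := G.neighborFinset v ∩ G.neighborFinset x with hA_def
  have hsplitU := card_filter_add_card_filter_not (s := A) (fun w => G.codegree v w + 2 = 8)
  have hnotU : {w ∈ A | ¬G.codegree v w + 2 = 8} ⊆
      {u ∈ G.neighborFinset v | ¬G.codegree v u + 2 = 8} :=
    filter_subset_filter _ inter_subset_left
  have hsplitZ : #(G.neighborFinset v ∩ G.neighborFinset z ∩ G.neighborFinset x) +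
      #(A \ G.neighborFinset z) = #A := by
    rw [inter_right_comm]
    exact card_inter_add_card_sdiff _ _
  have hzA : z ∈ A \ G.neighborFinset z :=
    mem_sdiff.2 ⟨mem_inter.2 ⟨(G.mem_neighborFinset v z).2 hz, (G.mem_neighborFinset x z).2
      ((G.mem_neighborFinset z x).1 hx).symm⟩, G.notMem_neighborFinset_self z⟩
  rw [mem_insert, not_or] at hpz
  -- `A \ N z` contains `z`, and also `p` when `p ∈ A`: in every case `A` is too big for `hAU`.
  by_cases hpA : p ∈ A
  · have : 2 ≤ #(A \ G.neighborFinset z) := by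
      rw [← card_pair hpz.1]
      exact card_le_card (insert_subset (mem_sdiff.2 ⟨hpA, hpz.2⟩) (singleton_subset_iff.2 hzA))
    have := card_le_card hnotU
    omega
  · have := card_pos.2 ⟨z, hzA⟩
    by_cases hp6 : G.codegree v p + 2 = 8
    · have := card_le_card hnotU
      omega
    · have hsub : {w ∈ A | ¬G.codegree v w + 2 = 8} ⊆
          {u ∈ G.neighborFinset v | ¬G.codegree v u + 2 = 8}.erase p :=
        fun w hw => mem_erase.2 ⟨fun e => hpA (e ▸ (mem_filter.1 hw).1), hnotU hw⟩
      have := card_le_card hsub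
      rw [card_erase_of_mem (mem_filter.2 ⟨hp, hp6⟩)] at this
      omega

theorem K3deg_le_22_of_forall_le (hreg : G.IsRegularOfDegree 8)
    (hinj : Function.Injective (K3deg G)) (hmax : ∀ u, K3deg G u ≤ K3deg G v) :
    K3deg G v ≤ 22 := by
  set f : V → ℕ := fun a => if G.codegree v a + 2 = 8 then 6 else 5
  have hcf : ∀ a ∈ G.neighborFinset v, G.codegree v a ≤ f a := fun a ha => by
    have := codegree_add_two_le hreg hinj ((G.mem_neighborFinset v a).1 ha)
    simp only [f]
    split_ifs <;> omega
  have hsplit := card_filter_add_card_filter_not (s := G.neighborFinset v)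
    (fun u => G.codegree v u + 2 = 8)
  rw [card_neighborFinset_eq_degree, hreg v] at hsplit
  have hsumf : ∑ a ∈ G.neighborFinset v, f a =
      40 + #{u ∈ G.neighborFinset v | G.codegree v u + 2 = 8} := by
    rw [sum_ite, sum_const, sum_const, smul_eq_mul, smul_eq_mul]
    omega
  have hU := card_filter_codegree_add_two_eq_le hreg hinj hmax
  have hsum := two_mul_K3deg G v
  have hsum_le := sum_le_sum hcf
  by_contra! h23
  have heq := (sum_eq_sum_iff_of_le hcf).1 (by omega)
  have hfive : ∀ a ∈ G.neighborFinset v, 5 ≤ G.codegree v a := fun a ha => by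
    rw [heq a ha]
    simp only [f]
    split_ifs <;> omega
  obtain ⟨z, hz, hzc, hz1⟩ := exists_codegree_add_two_eq_K3deg_add_one_eq hreg hinj hmax
    (by norm_num) (by omega)
  exact K3deg_add_one_ne_of_forall_le hreg hinj hmax hfive (by omega) hz hzc hz1

end Octic

end SimpleGraph

theorem stmt18 {V : Type*} [Fintype V] [DecidableEq V]
    (G : SimpleGraph V) [DecidableRel G.Adj]
    (hreg : G.IsRegularOfDegree 8)
    (hirr : ∀ u w : V, K3deg G u = K3deg G w → u = w) :
    Fintype.card V ≤ 22 := by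
  have hinj : Function.Injective (K3deg G) := fun u w h => hirr u w h
  by_contra! hcard
  have : Nonempty V := Fintype.card_pos_iff.1 (by omega)
  obtain ⟨v, -, hmax⟩ := exists_max_image univ (K3deg G) univ_nonempty
  have hle : ∀ u, K3deg G u < 23 := fun u => Nat.lt_succ_of_le <|
    (hmax u (mem_univ u)).trans (G.K3deg_le_22_of_forall_le hreg hinj fun u => hmax u (mem_univ u))
  have hcard23 : Fintype.card V = 23 := by
    have := card_le_card_of_injOn (K3deg G) (s := univ) (t := range 23)
      (fun u _ => mem_range.2 (hle u)) hinj.injOn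
    rw [card_univ, card_range] at this
    omega
  have hsum := sum_eq_sum_range_of_injective hinj fun u => hcard23 ▸ hle u
  rw [G.sum_K3deg, hcard23] at hsum
  have := sum_range_id_mul_two 23
  omega
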